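/- For a matrix A ∈ GL_d(K) and injective order morphisms φ, ψ : [k] → [d], the k×k minor satisfies the generalized Cramer/Jacobi identity: sgn(φ*) · det(A_{φ,ψ}) · det(A^{-1}) = sgn(ψ*) · det((A^{-1})^t_{φ*,ψ*}), where A_{φ,ψ} = (a_{φ(i),ψ(j)})_{i,j ∈ [k]} and φ*, ψ* are the complementary order morphisms [d−k] → [d]. -/

import Mathlib

/-!
Reordering the rows of `A` as `φ, φ*` and the columns as `ψ, ψ*` multiplies `det A` by the
signs of two permutations of `Fin d`; each sign is read off from its inversions, which all pair an
index of the first block with a smaller one of the second. For the reordered matrix `M` with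
inverse `N`, the block identity `N * [[M₁₁, 0], [M₂₁, 1]] = [[1, N₁₂], [0, N₂₂]]` gives
`det N * det M₁₁ = det N₂₂`, and this is the identity after the signs are collected.
-/

open Equiv Finset Matrix

theorem Function.Injective.bijective_sumElim {α β γ : Type*} {f : α → γ} {g : β → γ}
    (hf : f.Injective) (hg : g.Injective) (hfg : Set.range g = (Set.range f)ᶜ) :
    (Sum.elim f g).Bijective := by
  refine ⟨hf.sumElim hg fun a b h => ?_, ?_⟩
  · exact (hfg ▸ Set.mem_range_self b : g b ∈ (Set.range f)ᶜ) ⟨a, h⟩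
  · rw [← Set.range_eq_univ, Set.Sum.elim_range, hfg, Set.union_compl_self]

theorem card_filter_inl_lt_add_card_filter_inr_lt {α β : Type*} [Fintype α] [Fintype β]
    {d : ℕ} (E : α ⊕ β ≃ Fin d) (x : Fin d) :
    #{a | E (.inl a) < x} + #{b | E (.inr b) < x} = x := by
  rw [card_filter, card_filter, ← Fintype.sum_sum_type (f := fun s => if E s < x then 1 else 0),
    E.sum_comp (fun c => if c < x then 1 else 0), ← card_filter, filter_gt_eq_Iio, Fin.card_Iio]

theorem Equiv.Perm.sign_eq_neg_one_pow_card_inversions {n : ℕ} (σ : Perm (Fin n)) :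
    sign σ = (-1) ^ #{p : Fin n × Fin n | p.1 < p.2 ∧ σ p.2 < σ p.1} := by
  rw [σ.sign_eq_prod_prod_Iio, ← prod_const, prod_filter, Fintype.prod_prod_type_right]
  refine prod_congr rfl fun j _ => ?_
  rw [← filter_gt_eq_Iio, prod_filter]
  refine prod_congr rfl fun i _ => ?_
  by_cases hij : i < j
  · rcases lt_or_gt_of_ne (σ.injective.ne hij.ne) with h | h <;> simp [hij, h, h.not_gt]
  · simp [hij]

theorem Equiv.Perm.sign_finSumFinEquiv_symm_trans {k m d : ℕ} (h : k + m = d)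
    (E : Fin k ⊕ Fin m ≃ Fin d) (hl : StrictMono (E ∘ .inl)) (hr : StrictMono (E ∘ .inr)) :
    sign ((finSumFinEquiv.trans (finCongr h)).symm.trans E) =
      (-1) ^ (∑ a, ((E (.inl a) : ℕ) + 1) + ∑ a : Fin k, ((a : ℕ) + 1)) := by
  set e := finSumFinEquiv.trans (finCongr h)
  have e_ll (a a' : Fin k) : e (.inl a) < e (.inl a') ↔ a < a' := by
    rw [Fin.lt_def, Fin.lt_def]; simp [e]
  have e_lr (a : Fin k) (b : Fin m) : e (.inl a) < e (.inr b) := by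
    rw [Fin.lt_def]; simpa [e] using Nat.lt_add_right _ a.isLt
  have e_rl (a : Fin k) (b : Fin m) : ¬ e (.inr b) < e (.inl a) := by
    rw [Fin.lt_def]; simp [e]; omega
  have e_rr (b b' : Fin m) : e (.inr b) < e (.inr b') ↔ b < b' := by
    rw [Fin.lt_def, Fin.lt_def]; simp [e]
  have hl' (a a' : Fin k) : ¬ (a < a' ∧ E (.inl a') < E (.inl a)) := fun h => (hl h.1).not_gt h.2
  have hr' (b b' : Fin m) : ¬ (b < b' ∧ E (.inr b') < E (.inr b)) := fun h => (hr h.1).not_gt h.2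
  -- inversions inside one block are excluded by monotonicity, and `e` puts the first block first
  have hinv : #{p : Fin d × Fin d | p.1 < p.2 ∧ (e.symm.trans E) p.2 < (e.symm.trans E) p.1} =
      ∑ a, #{b | E (.inr b) < E (.inl a)} := by
    simp_rw [card_filter]
    rw [← (e.prodCongr e).sum_comp]
    simp only [Fintype.sum_prod_type, Fintype.sum_sum_type, prodCongr_apply, Prod.map,
      trans_apply, symm_apply_apply, e_ll, e_lr, e_rl, e_rr, hl', hr']
    simp
  have hcount (a : Fin k) : #{b | E (.inr b) < E (.inl a)} + a = E (.inl a) := by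
    have hbelow : #{a' | E (.inl a') < E (.inl a)} = a := by
      simp_rw [← Function.comp_apply (f := E) (g := Sum.inl), hl.lt_iff_lt, filter_gt_eq_Iio,
        Fin.card_Iio]
    rw [← card_filter_inl_lt_add_card_filter_inr_lt E, hbelow, add_comm]
  have hexp : ∑ a, ((E (.inl a) : ℕ) + 1) + ∑ a : Fin k, ((a : ℕ) + 1) =
      ∑ a, #{b | E (.inr b) < E (.inl a)} + 2 * ∑ a : Fin k, ((a : ℕ) + 1) := by
    simp only [← hcount, sum_add_distrib]
    ring
  rw [sign_eq_neg_one_pow_card_inversions, hinv, hexp, pow_add, pow_mul, neg_one_sq, one_pow,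
    mul_one]

theorem Matrix.det_submatrix_equiv {m n R : Type*} [Fintype m] [DecidableEq m] [Fintype n]
    [DecidableEq n] [CommRing R] (A : Matrix n n R) (e f : m ≃ n) :
    (A.submatrix e f).det = Perm.sign (f.symm.trans e) * A.det := by
  have : A.submatrix e f = (A.submatrix (f.symm.trans e) id).submatrix f f := by ext; simp
  rw [this, det_submatrix_equiv_self, det_permute]

theorem Matrix.det_mul_det_toBlocks₁₁_of_mul_eq_one {m n R : Type*} [Fintype m] [DecidableEq m]
    [Fintype n] [DecidableEq n] [CommRing R] {M N : Matrix (m ⊕ n) (m ⊕ n) R} (h : N * M = 1) :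
    N.det * M.toBlocks₁₁.det = N.toBlocks₂₂.det := by
  rw [← fromBlocks_toBlocks N, ← fromBlocks_toBlocks M, fromBlocks_multiply, ← fromBlocks_one,
    fromBlocks_inj] at h
  obtain ⟨h₁₁, -, h₂₁, -⟩ := h
  have key : N * fromBlocks M.toBlocks₁₁ 0 M.toBlocks₂₁ 1 =
      fromBlocks 1 N.toBlocks₁₂ 0 N.toBlocks₂₂ := by
    rw [← fromBlocks_toBlocks N, fromBlocks_multiply]
    simp [h₁₁, h₂₁]
  simpa [det_fromBlocks_zero₁₂, det_fromBlocks_zero₂₁] using congrArg det key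

theorem Matrix.sign_mul_det_mul_det_submatrix_inl {m p n R : Type*} [Fintype m] [DecidableEq m]
    [Fintype p] [DecidableEq p] [Fintype n] [DecidableEq n] [CommRing R]
    {A B : Matrix n n R} (hBA : B * A = 1) (e f : m ⊕ p ≃ n) :
    Perm.sign (e.symm.trans f) * B.det * (A.submatrix (e ∘ .inl) (f ∘ .inl)).det =
      (B.submatrix (f ∘ .inr) (e ∘ .inr)).det := by
  have h : B.submatrix f e * A.submatrix e f = 1 := by
    rw [submatrix_mul_equiv, hBA, submatrix_one_equiv]
  rw [← det_submatrix_equiv]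
  exact det_mul_det_toBlocks₁₁_of_mul_eq_one h

/-- Generalized Cramer/Jacobi identity for minors: for `A ∈ GL_d(K)` and injective order
morphisms `φ, ψ : [k] → [d]` with complementary order morphisms `φ*, ψ* : [d−k] → [d]`,
`sgn(φ*) · det(A_{φ,ψ}) · det(A⁻¹) = sgn(ψ*) · det((A⁻¹)ᵗ_{φ*,ψ*})`,
where `sgn χ = (−1)^{Σ_i χ*(i)}` (so `sgn(φ*) = (−1)^{Σ_i φ(i)}`), and `[n] = {1,…,n}` is
modelled by `Fin n` (0-based, whence the `+ 1`). -/
theorem stmt14 {K : Type*} [Field K] {d k : ℕ} (hkd : k ≤ d)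
    (A : Matrix (Fin d) (Fin d) K) (hA : IsUnit A.det)
    (φ ψ : Fin k → Fin d) (φs ψs : Fin (d - k) → Fin d)
    (hφ : StrictMono φ) (hψ : StrictMono ψ) (hφs : StrictMono φs) (hψs : StrictMono ψs)
    (hφc : Set.range φs = (Set.range φ)ᶜ) (hψc : Set.range ψs = (Set.range ψ)ᶜ) :
    ((-1 : K) ^ (∑ i, ((φ i : ℕ) + 1))) * (A.submatrix φ ψ).det * A⁻¹.det =
      ((-1 : K) ^ (∑ i, ((ψ i : ℕ) + 1))) * ((A⁻¹.transpose).submatrix φs ψs).det := by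
  set e := finSumFinEquiv.trans (finCongr (Nat.add_sub_cancel' hkd))
  set Eφ := Equiv.ofBijective _ (hφ.injective.bijective_sumElim hφs.injective hφc)
  set Eψ := Equiv.ofBijective _ (hψ.injective.bijective_sumElim hψs.injective hψc)
  have hsign : Perm.sign (Eφ.symm.trans Eψ) =
      (-1) ^ (∑ i, ((φ i : ℕ) + 1)) * (-1) ^ (∑ i, ((ψ i : ℕ) + 1)) := by
    have hfactor : Eφ.symm.trans Eψ = (e.symm.trans Eφ).symm.trans (e.symm.trans Eψ) := by
      ext; simp
    rw [hfactor, Perm.sign_trans, Perm.sign_symm,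
      Perm.sign_finSumFinEquiv_symm_trans _ Eψ hψ hψs,
      Perm.sign_finSumFinEquiv_symm_trans _ Eφ hφ hφs, pow_add, pow_add, mul_mul_mul_comm,
      Int.units_mul_self, mul_one, mul_comm]
    rfl
  have hjac : (Perm.sign (Eφ.symm.trans Eψ) : K) * A⁻¹.det * (A.submatrix φ ψ).det =
      (A⁻¹.submatrix ψs φs).det :=
    sign_mul_det_mul_det_submatrix_inl (nonsing_inv_mul A hA) Eφ Eψ
  rw [← transpose_submatrix, det_transpose, ← hjac, hsign]
  push_cast
  have hsq : (-1 : K) ^ (∑ i, ((ψ i : ℕ) + 1)) * (-1) ^ (∑ i, ((ψ i : ℕ) + 1)) = 1 := by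
    rw [← pow_add, Even.neg_one_pow ⟨_, rfl⟩]
  linear_combination
    (-(-1 : K) ^ (∑ i, ((φ i : ℕ) + 1)) * (A.submatrix φ ψ).det * A⁻¹.det) * hsq
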